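/- For every k ∈ ℕ, sup{ ‖x‖_T / ‖x‖_k : x ∈ c00, ‖x‖_{ℓ1} = 1 } = ∞; in particular, there is no constant K > 0 such that ‖x‖_T ≤ K ‖x‖_k for all x ∈ c00, i.e., the Tsirelson norm ‖·‖_T is not equivalent to any of its iterates ‖·‖_k. -/
import Mathlib


/-- The ℓ¹-norm on `c00 = ℕ →₀ ℝ`. -/
noncomputable def l1 (x : ℕ →₀ ℝ) : ℝ := ∑ n ∈ x.support, |x n|

/-- `restr E x = Ex`, the restriction of `x` to the finite set `E`. -/
noncomputable def restr (E : Finset ℕ) (x : ℕ →₀ ℝ) : ℕ →₀ ℝ :=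
  x.filter (fun n => n ∈ E)

/-- `Admissible n Es` says that `E_1, …, E_n` are finite nonempty subsets of ℕ
with `n ≤ E_1 < E_2 < ⋯ < E_n`. -/
def Admissible (n : ℕ) (Es : Fin n → Finset ℕ) : Prop :=
  0 < n ∧ (∀ i, (Es i).Nonempty) ∧
    (∀ i : Fin n, ∀ a ∈ Es i, n ≤ a) ∧
    (∀ i j : Fin n, i < j → ∀ a ∈ Es i, ∀ b ∈ Es j, a < b)

/-- The Tsirelson iterate norms `‖·‖_k`. -/
noncomputable def tsir : ℕ → (ℕ →₀ ℝ) → ℝ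
  | 0, x => ⨆ n, |x n|
  | (k + 1), x => max (tsir k x)
      (sSup { r : ℝ | ∃ n : ℕ, ∃ Es : Fin n → Finset ℕ, Admissible n Es ∧
        r = (1 / 2) * ∑ i, tsir k (restr (Es i) x) })

-- basic restr lemmas
lemma restr_apply (E : Finset ℕ) (x : ℕ →₀ ℝ) (n : ℕ) :
    restr E x n = if n ∈ E then x n else 0 := by
  simp [restr, Finsupp.filter_apply]

lemma restr_support (E : Finset ℕ) (x : ℕ →₀ ℝ) :
    (restr E x).support = x.support.filter (fun n => n ∈ E) := by
  simp [restr, Finsupp.support_filter]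

lemma restr_add (E : Finset ℕ) (x y : ℕ →₀ ℝ) :
    restr E (x + y) = restr E x + restr E y := by
  simp [restr, Finsupp.filter_add]

lemma restr_smul (E : Finset ℕ) (c : ℝ) (x : ℕ →₀ ℝ) :
    restr E (c • x) = c • restr E x := by
  ext n
  simp only [restr_apply, Finsupp.smul_apply, smul_eq_mul]
  split <;> simp

lemma restr_restr (E F : Finset ℕ) (x : ℕ →₀ ℝ) :
    restr E (restr F x) = restr (E ∩ F) x := by
  ext n
  simp only [restr_apply, Finset.mem_inter]
  by_cases h1 : n ∈ E <;> by_cases h2 : n ∈ F <;> simp [h1, h2]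

lemma restr_zero (E : Finset ℕ) : restr E (0 : ℕ →₀ ℝ) = 0 := by
  ext n
  rw [restr_apply]
  split <;> rfl

lemma restr_eq_zero_of_disjoint {E : Finset ℕ} {x : ℕ →₀ ℝ}
    (h : ∀ n ∈ x.support, n ∉ E) : restr E x = 0 := by
  ext n
  simp only [restr_apply, Finsupp.coe_zero, Pi.zero_apply]
  split
  · rename_i hn
    by_cases hx : x n = 0
    · exact hx
    · exact absurd hn (h n (Finsupp.mem_support_iff.mpr hx))
  · rfl

lemma restr_support_self (x : ℕ →₀ ℝ) : restr x.support x = x := by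
  ext n
  rw [restr_apply]
  split
  · rfl
  · rename_i h
    by_cases hx : x n = 0
    · exact hx.symm
    · exact absurd (Finsupp.mem_support_iff.mpr hx) h

-- l1 lemmas
lemma l1_nonneg (x : ℕ →₀ ℝ) : 0 ≤ l1 x :=
  Finset.sum_nonneg fun _ _ => abs_nonneg _

lemma abs_le_l1 (x : ℕ →₀ ℝ) (n : ℕ) : |x n| ≤ l1 x := by
  by_cases h : n ∈ x.support
  · exact Finset.single_le_sum (f := fun m => |x m|) (fun _ _ => abs_nonneg _) h
  · rw [Finsupp.notMem_support_iff.mp h]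
    simpa using l1_nonneg x

lemma l1_restr_le (E : Finset ℕ) (x : ℕ →₀ ℝ) : l1 (restr E x) ≤ l1 x := by
  rw [l1, restr_support]
  calc ∑ n ∈ x.support.filter (fun n => n ∈ E), |restr E x n|
      = ∑ n ∈ x.support.filter (fun n => n ∈ E), |x n| := by
        apply Finset.sum_congr rfl
        intro n hn
        rw [restr_apply]
        simp only [Finset.mem_filter] at hn
        rw [if_pos hn.2]
    _ ≤ l1 x := Finset.sum_le_sum_of_subset_of_nonneg (Finset.filter_subset _ _)
        (fun _ _ _ => abs_nonneg _)

lemma l1_smul (c : ℝ) (hc : 0 < c) (x : ℕ →₀ ℝ) : l1 (c • x) = c * l1 x := by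
  rw [l1, l1, Finsupp.support_smul_eq (ne_of_gt hc), Finset.mul_sum]
  apply Finset.sum_congr rfl
  intro n _
  rw [Finsupp.smul_apply, smul_eq_mul, abs_mul, abs_of_pos hc]

lemma l1_add_of_disjoint {x y : ℕ →₀ ℝ} (h : Disjoint x.support y.support) :
    l1 (x + y) = l1 x + l1 y := by
  classical
  rw [l1, Finsupp.support_add_eq h, Finset.sum_union h, l1, l1]
  congr 1
  · apply Finset.sum_congr rfl
    intro n hn
    have : y n = 0 := Finsupp.notMem_support_iff.mp (Finset.disjoint_left.mp h hn)
    simp [this]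
  · apply Finset.sum_congr rfl
    intro n hn
    have : x n = 0 := Finsupp.notMem_support_iff.mp (Finset.disjoint_right.mp h hn)
    simp [this]

-- sum of l1 of restrictions to pairwise disjoint sets
lemma sum_l1_restr_le {n : ℕ} (F : Fin n → Finset ℕ) (x : ℕ →₀ ℝ)
    (hdisj : ∀ i j : Fin n, i ≠ j → Disjoint (F i) (F j)) :
    ∑ i, l1 (restr (F i) x) ≤ l1 x := by
  classical
  have key : ∀ i : Fin n, l1 (restr (F i) x) = ∑ m ∈ x.support.filter (fun m => m ∈ F i), |x m| := by
    intro i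
    rw [l1, restr_support]
    apply Finset.sum_congr rfl
    intro m hm
    simp only [Finset.mem_filter] at hm
    rw [restr_apply, if_pos hm.2]
  calc ∑ i, l1 (restr (F i) x)
      = ∑ i, ∑ m ∈ x.support.filter (fun m => m ∈ F i), |x m| := by
        exact Finset.sum_congr rfl (fun i _ => key i)
    _ = ∑ m ∈ Finset.univ.biUnion (fun i : Fin n => x.support.filter (fun m => m ∈ F i)), |x m| := by
        rw [Finset.sum_biUnion]
        intro i _ j _ hij
        show Disjoint _ _
        rw [Finset.disjoint_left]
        intro m hmi hmj
        simp only [Finset.mem_filter] at hmi hmj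
        exact Finset.disjoint_left.mp (hdisj i j hij) hmi.2 hmj.2
    _ ≤ l1 x := Finset.sum_le_sum_of_subset_of_nonneg
        (by intro m hm; simp only [Finset.mem_biUnion, Finset.mem_filter] at hm;
            obtain ⟨i, _, hm, _⟩ := hm; exact hm)
        (fun _ _ _ => abs_nonneg _)
-- the admissible-value set
def admSet (k : ℕ) (x : ℕ →₀ ℝ) : Set ℝ :=
  { r : ℝ | ∃ n : ℕ, ∃ Es : Fin n → Finset ℕ, Admissible n Es ∧
        r = (1 / 2) * ∑ i, tsir k (restr (Es i) x) }

lemma tsir_succ (k : ℕ) (x : ℕ →₀ ℝ) :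
    tsir (k + 1) x = max (tsir k x) (sSup (admSet k x)) := rfl

lemma admissible_disjoint {n : ℕ} {Es : Fin n → Finset ℕ} (h : Admissible n Es) :
    ∀ i j : Fin n, i ≠ j → Disjoint (Es i) (Es j) := by
  intro i j hij
  rw [Finset.disjoint_left]
  intro a hai haj
  rcases lt_or_gt_of_ne hij with h' | h'
  · exact lt_irrefl a (h.2.2.2 i j h' a hai a haj)
  · exact lt_irrefl a (h.2.2.2 j i h' a haj a hai)

lemma tsir_le_l1 (k : ℕ) (x : ℕ →₀ ℝ) : tsir k x ≤ l1 x := by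
  induction k generalizing x with
  | zero =>
    exact ciSup_le fun n => abs_le_l1 x n
  | succ k ih =>
    rw [tsir_succ]
    apply max_le (ih x)
    apply Real.sSup_le _ (l1_nonneg x)
    rintro r ⟨n, Es, hadm, rfl⟩
    have h1 : ∑ i, tsir k (restr (Es i) x) ≤ l1 x := by
      calc ∑ i, tsir k (restr (Es i) x) ≤ ∑ i, l1 (restr (Es i) x) :=
            Finset.sum_le_sum fun i _ => ih _
        _ ≤ l1 x := sum_l1_restr_le Es x (admissible_disjoint hadm)
    nlinarith [l1_nonneg x]

lemma bddAbove_range_abs (x : ℕ →₀ ℝ) : BddAbove (Set.range fun n => |x n|) := by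
  refine ⟨l1 x, ?_⟩
  rintro r ⟨n, rfl⟩
  exact abs_le_l1 x n

lemma abs_le_tsir0 (x : ℕ →₀ ℝ) (n : ℕ) : |x n| ≤ tsir 0 x :=
  le_ciSup (bddAbove_range_abs x) n

lemma tsir_nonneg (k : ℕ) (x : ℕ →₀ ℝ) : 0 ≤ tsir k x := by
  induction k with
  | zero => exact le_trans (abs_nonneg (x 0)) (abs_le_tsir0 x 0)
  | succ k ih => rw [tsir_succ]; exact le_trans ih (le_max_left _ _)

lemma bddAbove_admSet (k : ℕ) (x : ℕ →₀ ℝ) : BddAbove (admSet k x) := by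
  refine ⟨l1 x, ?_⟩
  rintro r ⟨n, Es, hadm, rfl⟩
  have h1 : ∑ i, tsir k (restr (Es i) x) ≤ l1 x := by
    calc ∑ i, tsir k (restr (Es i) x) ≤ ∑ i, l1 (restr (Es i) x) :=
          Finset.sum_le_sum fun i _ => tsir_le_l1 _ _
      _ ≤ l1 x := sum_l1_restr_le Es x (admissible_disjoint hadm)
  nlinarith [l1_nonneg x]

lemma adm_le_tsir_succ {k n : ℕ} {Es : Fin n → Finset ℕ} (x : ℕ →₀ ℝ)
    (hadm : Admissible n Es) :
    (1 / 2) * ∑ i, tsir k (restr (Es i) x) ≤ tsir (k + 1) x := by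
  rw [tsir_succ]
  exact le_trans (le_csSup (bddAbove_admSet k x) ⟨n, Es, hadm, rfl⟩) (le_max_right _ _)

lemma tsir_succ_le {k : ℕ} {x : ℕ →₀ ℝ} {A : ℝ} (hA : 0 ≤ A)
    (h1 : tsir k x ≤ A)
    (h2 : ∀ (n : ℕ) (Es : Fin n → Finset ℕ), Admissible n Es →
      (1 / 2) * ∑ i, tsir k (restr (Es i) x) ≤ A) :
    tsir (k + 1) x ≤ A := by
  rw [tsir_succ]
  apply max_le h1
  apply Real.sSup_le _ hA
  rintro r ⟨n, Es, hadm, rfl⟩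
  exact h2 n Es hadm

lemma tsir_le_succ (k : ℕ) (x : ℕ →₀ ℝ) : tsir k x ≤ tsir (k + 1) x := by
  rw [tsir_succ]; exact le_max_left _ _

lemma tsir_mono_k {k k' : ℕ} (h : k ≤ k') (x : ℕ →₀ ℝ) : tsir k x ≤ tsir k' x := by
  induction k' with
  | zero => simp_all
  | succ k' ih =>
    rcases Nat.lt_or_ge k (k' + 1) with h' | h'
    · exact le_trans (ih (Nat.lt_succ_iff.mp h')) (tsir_le_succ k' x)
    · have : k = k' + 1 := le_antisymm h h'
      rw [this]

lemma tsir_zero (k : ℕ) : tsir k (0 : ℕ →₀ ℝ) = 0 := by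
  induction k with
  | zero =>
    show (⨆ n, |(0 : ℕ →₀ ℝ) n|) = 0
    simp
  | succ k ih =>
    rw [tsir_succ, ih]
    rw [max_eq_right]
    · apply le_antisymm
      · apply Real.sSup_le _ le_rfl
        rintro r ⟨n, Es, hadm, rfl⟩
        simp [restr_zero, ih]
      · apply le_csSup (bddAbove_admSet k 0)
        refine ⟨1, fun _ => {1}, ⟨one_pos, fun _ => ⟨1, Finset.mem_singleton_self 1⟩,
          ?_, ?_⟩, ?_⟩
        · intro i a ha
          rw [Finset.mem_singleton] at ha
          omega
        · intro i j hij
          exact absurd hij (by omega)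
        · simp [restr_zero, ih]
    · apply le_csSup (bddAbove_admSet k 0)
      refine ⟨1, fun _ => {1}, ⟨one_pos, fun _ => ⟨1, Finset.mem_singleton_self 1⟩,
        ?_, ?_⟩, ?_⟩
      · intro i a ha
        rw [Finset.mem_singleton] at ha
        omega
      · intro i j hij
        exact absurd hij (by omega)
      · simp [restr_zero, ih]

lemma tsir_add_le (k : ℕ) (x y : ℕ →₀ ℝ) :
    tsir k (x + y) ≤ tsir k x + tsir k y := by
  induction k generalizing x y with
  | zero =>
    apply ciSup_le
    intro n
    calc |(x + y) n| ≤ |x n| + |y n| := by rw [Finsupp.add_apply]; exact abs_add_le _ _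
      _ ≤ tsir 0 x + tsir 0 y := add_le_add (abs_le_tsir0 x n) (abs_le_tsir0 y n)
  | succ k ih =>
    apply tsir_succ_le (add_nonneg (tsir_nonneg _ _) (tsir_nonneg _ _))
    · exact le_trans (ih x y) (add_le_add (tsir_le_succ _ _) (tsir_le_succ _ _))
    · intro n Es hadm
      have : ∀ i : Fin n, tsir k (restr (Es i) (x + y)) ≤
          tsir k (restr (Es i) x) + tsir k (restr (Es i) y) := by
        intro i
        rw [restr_add]
        exact ih _ _
      calc (1/2) * ∑ i, tsir k (restr (Es i) (x + y))
          ≤ (1/2) * ∑ i, (tsir k (restr (Es i) x) + tsir k (restr (Es i) y)) := by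
            have := Finset.sum_le_sum (fun i (_ : i ∈ Finset.univ) => this i)
            linarith
        _ = (1/2) * ∑ i, tsir k (restr (Es i) x) + (1/2) * ∑ i, tsir k (restr (Es i) y) := by
            rw [Finset.sum_add_distrib]; ring
        _ ≤ tsir (k+1) x + tsir (k+1) y :=
            add_le_add (adm_le_tsir_succ x hadm) (adm_le_tsir_succ y hadm)

lemma tsir_smul_le (k : ℕ) (c : ℝ) (hc : 0 ≤ c) (x : ℕ →₀ ℝ) :
    tsir k (c • x) ≤ c * tsir k x := by
  induction k generalizing x with
  | zero =>
    apply ciSup_le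
    intro n
    rw [Finsupp.smul_apply, smul_eq_mul, abs_mul, abs_of_nonneg hc]
    exact mul_le_mul_of_nonneg_left (abs_le_tsir0 x n) hc
  | succ k ih =>
    apply tsir_succ_le (mul_nonneg hc (tsir_nonneg _ _))
    · exact le_trans (ih x) (mul_le_mul_of_nonneg_left (tsir_le_succ _ _) hc)
    · intro n Es hadm
      calc (1/2) * ∑ i, tsir k (restr (Es i) (c • x))
          ≤ (1/2) * ∑ i, (c * tsir k (restr (Es i) x)) := by
            have : ∀ i : Fin n, tsir k (restr (Es i) (c • x)) ≤ c * tsir k (restr (Es i) x) := by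
              intro i; rw [restr_smul]; exact ih _
            have := Finset.sum_le_sum (fun i (_ : i ∈ Finset.univ) => this i)
            linarith
        _ = c * ((1/2) * ∑ i, tsir k (restr (Es i) x)) := by
            rw [← Finset.mul_sum]; ring
        _ ≤ c * tsir (k+1) x :=
            mul_le_mul_of_nonneg_left (adm_le_tsir_succ x hadm) hc

lemma tsir_smul (k : ℕ) (c : ℝ) (hc : 0 ≤ c) (x : ℕ →₀ ℝ) :
    tsir k (c • x) = c * tsir k x := by
  rcases eq_or_lt_of_le hc with h | h
  · rw [← h, zero_smul, zero_mul, tsir_zero]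
  · apply le_antisymm (tsir_smul_le k c hc x)
    have h2 := tsir_smul_le k c⁻¹ (le_of_lt (inv_pos.mpr h)) (c • x)
    rw [inv_smul_smul₀ (ne_of_gt h)] at h2
    calc c * tsir k x ≤ c * (c⁻¹ * tsir k (c • x)) :=
          mul_le_mul_of_nonneg_left h2 hc
      _ = tsir k (c • x) := by field_simp
lemma main_construction : ∀ k : ℕ, ∀ ε : ℝ, 0 < ε → ∀ P : ℕ, ∃ x : ℕ →₀ ℝ,
    (∀ n ∈ x.support, P ≤ n) ∧ (∀ n, 0 ≤ x n) ∧ l1 x = 1 ∧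
    ((2:ℝ)^(k+1))⁻¹ ≤ tsir (k+1) x ∧ (∀ E : Finset ℕ, tsir k (restr E x) ≤ ε) := by
  intro k
  induction k with
  | zero =>
    intro ε hε P
    set M : ℕ := max 1 ⌈1/ε⌉₊ with hM
    have hM1 : 1 ≤ M := le_max_left _ _
    have hMpos : (0:ℝ) < M := by positivity
    have hMinv : (M:ℝ)⁻¹ ≤ ε := by
      have h1 : 1/ε ≤ (M:ℝ) := le_trans (Nat.le_ceil _) (by exact_mod_cast Nat.le_max_right 1 _)
      rw [inv_eq_one_div, div_le_iff₀ hMpos]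
      rw [div_le_iff₀ hε] at h1
      nlinarith
    set R : ℕ := max P M with hR
    set x : ℕ →₀ ℝ := Finsupp.indicator (Finset.Ico R (R+M)) (fun _ _ => (M:ℝ)⁻¹) with hx
    have hxval : ∀ n, x n = if n ∈ Finset.Ico R (R+M) then (M:ℝ)⁻¹ else 0 := by
      intro n
      rw [hx]
      classical
      rw [Finsupp.indicator_apply]
      split <;> simp_all
    have hsupp : x.support = Finset.Ico R (R+M) := by
      ext n
      rw [Finsupp.mem_support_iff, hxval]
      have hne : ((M:ℝ))⁻¹ ≠ 0 := by positivity
      split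
      · rename_i h; simpa [hne] using h
      · rename_i h; simpa using h
    refine ⟨x, ?_, ?_, ?_, ?_, ?_⟩
    · intro n hn
      rw [hsupp, Finset.mem_Ico] at hn
      exact le_trans (le_max_left P M) hn.1
    · intro n
      rw [hxval]
      split
      · positivity
      · exact le_refl 0
    · rw [l1, hsupp]
      have : ∀ n ∈ Finset.Ico R (R+M), |x n| = (M:ℝ)⁻¹ := by
        intro n hn
        rw [hxval, if_pos hn, abs_of_pos (by positivity)]
      rw [Finset.sum_congr rfl this, Finset.sum_const, Nat.card_Ico]
      have : R + M - R = M := by omega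
      rw [this, nsmul_eq_mul]
      field_simp
    · -- lower bound: tsir 1 x ≥ 1/2
      have hadm : Admissible M (fun i : Fin M => {R + (i:ℕ)}) := by
        refine ⟨hM1, fun i => ⟨R + i, Finset.mem_singleton_self _⟩, ?_, ?_⟩
        · intro i a ha
          rw [Finset.mem_singleton] at ha
          subst ha
          have : M ≤ R := le_max_right P M
          omega
        · intro i j hij a ha b hb
          rw [Finset.mem_singleton] at ha hb
          subst ha; subst hb
          have : (i:ℕ) < (j:ℕ) := hij
          omega
      have key : ∀ i : Fin M, (M:ℝ)⁻¹ ≤ tsir 0 (restr {R + (i:ℕ)} x) := by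
        intro i
        have h1 : restr {R + (i:ℕ)} x (R + i) = (M:ℝ)⁻¹ := by
          rw [restr_apply, if_pos (Finset.mem_singleton_self _), hxval, if_pos]
          rw [Finset.mem_Ico]
          have : (i:ℕ) < M := i.isLt
          omega
        calc (M:ℝ)⁻¹ = |restr {R + (i:ℕ)} x (R + i)| := by rw [h1, abs_of_pos (by positivity)]
          _ ≤ tsir 0 (restr {R + (i:ℕ)} x) := abs_le_tsir0 _ _
      have hle := adm_le_tsir_succ (k := 0) x hadm
      have hsum : (M:ℝ) * (M:ℝ)⁻¹ ≤ ∑ i : Fin M, tsir 0 (restr {R + (i:ℕ)} x) := by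
        calc (M:ℝ) * (M:ℝ)⁻¹ = ∑ _i : Fin M, (M:ℝ)⁻¹ := by
              rw [Finset.sum_const, Finset.card_univ, Fintype.card_fin, nsmul_eq_mul]
          _ ≤ _ := Finset.sum_le_sum (fun i _ => key i)
      have hMM : (M:ℝ) * (M:ℝ)⁻¹ = 1 := by field_simp
      rw [hMM] at hsum
      calc ((2:ℝ)^(0+1))⁻¹ = (1/2) * 1 := by norm_num
        _ ≤ (1/2) * ∑ i : Fin M, tsir 0 (restr {R + (i:ℕ)} x) := by linarith
        _ ≤ tsir (0+1) x := hle
    · intro E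
      apply ciSup_le
      intro n
      rw [restr_apply]
      split
      · rw [hxval]
        split
        · rw [abs_of_pos (by positivity)]; exact hMinv
        · simpa using le_of_lt hε
      · simpa using le_of_lt hε
  | succ k ih =>
    intro ε hε P
    set ε₀ : ℝ := ε/2 with hε₀def
    have hε₀ : 0 < ε₀ := by positivity
    set M : ℕ := max 1 ⌈1/ε⌉₊ with hM
    have hM1 : 1 ≤ M := le_max_left _ _
    have hMpos : (0:ℝ) < M := by positivity
    have hMinv : (M:ℝ)⁻¹ ≤ ε := by
      have h1 : 1/ε ≤ (M:ℝ) := le_trans (Nat.le_ceil _) (by exact_mod_cast Nat.le_max_right 1 _)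
      rw [inv_eq_one_div, div_le_iff₀ hMpos]
      rw [div_le_iff₀ hε] at h1
      nlinarith
    set R : ℕ := max P M with hR
    set c2 : ℝ := ((2:ℝ)^(k+1))⁻¹ with hc2
    -- the chain of blocks
    have blocks : ∀ N : ℕ, N ≤ M → ∃ (z : ℕ →₀ ℝ) (Q : ℕ) (Es : Fin N → Finset ℕ),
        (∀ n, 0 ≤ z n) ∧ l1 z = N ∧ (∀ n ∈ z.support, R ≤ n ∧ n < Q) ∧ 1 ≤ Q ∧ R ≤ Q ∧
        (∀ E : Finset ℕ, tsir k (restr E z) ≤ N * ε₀) ∧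
        (∀ (E : Finset ℕ) (n : ℕ) (F : Fin n → Finset ℕ), Admissible n F →
          ∑ i, tsir k (restr (F i ∩ E) z) ≤ 1 + N * ε₀) ∧
        (∀ j, Es j ⊆ z.support) ∧ (∀ j, (Es j).Nonempty) ∧
        (∀ j j' : Fin N, j < j' → ∀ a ∈ Es j, ∀ b ∈ Es j', a < b) ∧
        (∀ j, c2 ≤ tsir (k+1) (restr (Es j) z)) := by
      intro N
      induction N with
      | zero =>
        intro _
        refine ⟨0, max R 1, Fin.elim0, ?_, ?_, ?_, le_max_right _ _, le_max_left _ _,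
          ?_, ?_, fun j => j.elim0, fun j => j.elim0, fun j => j.elim0, fun j => j.elim0⟩
        · intro n; exact le_refl 0
        · simp [l1]
        · intro n hn; simp at hn
        · intro E; rw [restr_zero, tsir_zero]; simp
        · intro E n F _
          have : ∀ i : Fin n, tsir k (restr (F i ∩ E) (0:ℕ→₀ℝ)) = 0 := by
            intro i; rw [restr_zero, tsir_zero]
          rw [Finset.sum_congr rfl (fun i _ => this i), Finset.sum_const]
          simp
      | succ N ihN =>
        intro hNM
        obtain ⟨z, Q, Es, hpos, hl1, hsuppz, hQ1, hRQ, he, hf, hEsub, hEne, hEord, hElow⟩ :=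
          ihN (le_trans (Nat.le_succ N) hNM)
        have hQpos : (0:ℝ) < Q := by exact_mod_cast hQ1
        set δ : ℝ := ε₀ / Q with hδdef
        have hδpos : 0 < δ := by positivity
        obtain ⟨y, hysupp, hypos, hyl1, hylow, hyup⟩ := ih δ hδpos Q
        set Qn : ℕ := max ((y.support.sup id) + 1) Q with hQn
        have hysupp2 : ∀ n ∈ y.support, Q ≤ n ∧ n < Qn := by
          intro n hn
          refine ⟨hysupp n hn, ?_⟩
          have : n ≤ y.support.sup id := Finset.le_sup (f := id) hn
          omega
        have hdisj : Disjoint z.support y.support := by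
          rw [Finset.disjoint_left]
          intro n hn hny
          have h1 := (hsuppz n hn).2
          have h2 := (hysupp2 n hny).1
          omega
        have hzy : ∀ n ∈ z.support, n ∉ y.support := fun n hn => Finset.disjoint_left.mp hdisj hn
        have hyz : ∀ n ∈ y.support, n ∉ z.support := fun n hn => Finset.disjoint_right.mp hdisj hn
        have hsuppsum : (z + y).support = z.support ∪ y.support := Finsupp.support_add_eq hdisj
        have hynz : y ≠ 0 := by
          intro h
          rw [h] at hyl1
          simp [l1] at hyl1
        have hQge1 : (1:ℝ) ≤ (Q:ℝ) := by exact_mod_cast hQ1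
        have hδε₀ : δ ≤ ε₀ := by
          rw [hδdef, div_le_iff₀ hQpos]
          nlinarith
        refine ⟨z + y, Qn, fun j => if h : (j:ℕ) < N then Es ⟨j, h⟩ else y.support,
          ?_, ?_, ?_, le_trans hQ1 (le_max_right _ _), le_trans hRQ (le_max_right _ _),
          ?_, ?_, ?_, ?_, ?_, ?_⟩
        · intro n
          rw [Finsupp.add_apply]
          exact add_nonneg (hpos n) (hypos n)
        · rw [l1_add_of_disjoint hdisj, hl1, hyl1]
          push_cast
          ring
        · intro n hn
          rw [hsuppsum, Finset.mem_union] at hn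
          rcases hn with hn | hn
          · obtain ⟨h1, h2⟩ := hsuppz n hn
            exact ⟨h1, by omega⟩
          · obtain ⟨h1, h2⟩ := hysupp2 n hn
            exact ⟨le_trans hRQ h1, h2⟩
        · -- hereditary bound (e)
          intro E
          rw [restr_add]
          calc tsir k (restr E z + restr E y) ≤ tsir k (restr E z) + tsir k (restr E y) :=
                tsir_add_le _ _ _
            _ ≤ N * ε₀ + δ := add_le_add (he E) (hyup E)
            _ ≤ (N+1 : ℕ) * ε₀ := by push_cast; nlinarith
        · -- admissible-family bound (f)
          intro E n F hadm
          have split : ∀ i : Fin n, tsir k (restr (F i ∩ E) (z + y)) ≤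
              tsir k (restr (F i ∩ E) z) + tsir k (restr (F i ∩ E) y) := by
            intro i
            rw [restr_add]
            exact tsir_add_le _ _ _
          have hsum : ∑ i, tsir k (restr (F i ∩ E) (z + y)) ≤
              (∑ i, tsir k (restr (F i ∩ E) z)) + ∑ i, tsir k (restr (F i ∩ E) y) := by
            rw [← Finset.sum_add_distrib]
            exact Finset.sum_le_sum (fun i _ => split i)
          by_cases hz : ∀ i : Fin n, restr (F i ∩ E) z = 0
          · have h1 : ∑ i, tsir k (restr (F i ∩ E) z) = 0 := by
              apply Finset.sum_eq_zero
              intro i _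
              rw [hz i, tsir_zero]
            have h2 : ∑ i, tsir k (restr (F i ∩ E) y) ≤ 1 := by
              calc ∑ i, tsir k (restr (F i ∩ E) y) ≤ ∑ i, l1 (restr (F i ∩ E) y) :=
                    Finset.sum_le_sum (fun i _ => tsir_le_l1 _ _)
                _ ≤ l1 y := by
                    apply sum_l1_restr_le
                    intro i j hij
                    exact Finset.disjoint_of_subset_left (Finset.inter_subset_left)
                      (Finset.disjoint_of_subset_right (Finset.inter_subset_left)
                        (admissible_disjoint hadm i j hij))
                _ = 1 := hyl1
            calc ∑ i, tsir k (restr (F i ∩ E) (z + y)) ≤ 0 + 1 := by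
                  rw [← h1] at *; linarith
              _ ≤ 1 + (N+1:ℕ) * ε₀ := by
                  have h3 : (0:ℝ) ≤ ((N:ℝ)+1) * ε₀ := by positivity
                  push_cast
                  linarith
          · push_neg at hz
            obtain ⟨i₀, hi₀⟩ := hz
            obtain ⟨p, hp⟩ := Finsupp.support_nonempty_iff.mpr hi₀
            rw [restr_support, Finset.mem_filter] at hp
            obtain ⟨hpz, hpF⟩ := hp
            rw [Finset.mem_inter] at hpF
            have hnp : n ≤ p := hadm.2.2.1 i₀ p hpF.1
            have hpQ : p < Q := (hsuppz p hpz).2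
            have hnQ : n < Q := lt_of_le_of_lt hnp hpQ
            have h2 : ∑ i, tsir k (restr (F i ∩ E) y) ≤ ε₀ := by
              calc ∑ i, tsir k (restr (F i ∩ E) y) ≤ ∑ _i : Fin n, δ := by
                    apply Finset.sum_le_sum
                    intro i _
                    exact hyup _
                _ = n * δ := by rw [Finset.sum_const, Finset.card_univ, Fintype.card_fin, nsmul_eq_mul]
                _ ≤ Q * δ := mul_le_mul_of_nonneg_right (by exact_mod_cast le_of_lt hnQ) (le_of_lt hδpos)
                _ = ε₀ := by rw [hδdef]; field_simp
            calc ∑ i, tsir k (restr (F i ∩ E) (z + y)) ≤ (1 + N * ε₀) + ε₀ :=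
                  le_trans hsum (add_le_add (hf E n F hadm) h2)
              _ ≤ 1 + (N+1:ℕ) * ε₀ := by push_cast; linarith
        · -- Es subset
          intro j
          by_cases h : (j:ℕ) < N
          · simp only [dif_pos h]
            rw [hsuppsum]
            exact le_trans (hEsub ⟨j, h⟩) Finset.subset_union_left
          · simp only [dif_neg h]
            rw [hsuppsum]
            exact Finset.subset_union_right
        · intro j
          by_cases h : (j:ℕ) < N
          · simp only [dif_pos h]; exact hEne ⟨j, h⟩
          · simp only [dif_neg h]; exact Finsupp.support_nonempty_iff.mpr hynz
        · -- ordering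
          intro j j' hjj' a ha b hb
          dsimp only at ha hb
          have hj : (j:ℕ) < (j':ℕ) := hjj'
          by_cases h' : (j':ℕ) < N
          · have h : (j:ℕ) < N := lt_trans hj h'
            rw [dif_pos h] at ha
            rw [dif_pos h'] at hb
            exact hEord ⟨j, h⟩ ⟨j', h'⟩ (by exact hj) a ha b hb
          · rw [dif_neg h'] at hb
            have h : (j:ℕ) < N := by
              have := j'.isLt
              omega
            rw [dif_pos h] at ha
            have haz : a ∈ z.support := hEsub ⟨j, h⟩ ha
            have h1 : a < Q := (hsuppz a haz).2
            have h2 : Q ≤ b := (hysupp2 b hb).1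
            omega
        · -- lower bounds
          intro j
          by_cases h : (j:ℕ) < N
          · simp only [dif_pos h]
            have hzero : restr (Es ⟨j, h⟩) y = 0 := by
              apply restr_eq_zero_of_disjoint
              intro n hn hmem
              have : n ∈ z.support := hEsub ⟨j, h⟩ hmem
              exact hyz n hn this
            rw [restr_add, hzero, add_zero]
            exact hElow ⟨j, h⟩
          · simp only [dif_neg h]
            have hzero : restr y.support z = 0 := by
              apply restr_eq_zero_of_disjoint
              intro n hn hmem
              exact hzy n hn hmem
            rw [restr_add, hzero, zero_add, restr_support_self]
            exact hylow
    obtain ⟨z, Q, Es, hpos, hl1, hsuppz, hQ1, hRQ, he, hf, hEsub, hEne, hEord, hElow⟩ :=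
      blocks M le_rfl
    set X : ℕ →₀ ℝ := (M:ℝ)⁻¹ • z with hX
    have hMinvnn : (0:ℝ) ≤ (M:ℝ)⁻¹ := by positivity
    have hMne : (M:ℝ)⁻¹ ≠ 0 := by positivity
    have hsuppX : X.support = z.support := Finsupp.support_smul_eq hMne
    refine ⟨X, ?_, ?_, ?_, ?_, ?_⟩
    · intro n hn
      rw [hsuppX] at hn
      exact le_trans (le_max_left P M) (hsuppz n hn).1
    · intro n
      rw [hX, Finsupp.smul_apply, smul_eq_mul]
      exact mul_nonneg hMinvnn (hpos n)
    · rw [hX, l1_smul _ (by positivity) z, hl1]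
      field_simp
    · -- lower bound
      have hadm : Admissible M Es := by
        refine ⟨hM1, hEne, ?_, hEord⟩
        intro j a ha
        have : a ∈ z.support := hEsub j ha
        exact le_trans (le_max_right P M) (hsuppz a this).1
      have hle := adm_le_tsir_succ (k := k+1) X hadm
      have key : ∀ j : Fin M, (M:ℝ)⁻¹ * c2 ≤ tsir (k+1) (restr (Es j) X) := by
        intro j
        rw [hX, restr_smul, tsir_smul _ _ hMinvnn]
        exact mul_le_mul_of_nonneg_left (hElow j) hMinvnn
      have hsum : (M:ℝ) * ((M:ℝ)⁻¹ * c2) ≤ ∑ j : Fin M, tsir (k+1) (restr (Es j) X) := by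
        calc (M:ℝ) * ((M:ℝ)⁻¹ * c2) = ∑ _j : Fin M, (M:ℝ)⁻¹ * c2 := by
              rw [Finset.sum_const, Finset.card_univ, Fintype.card_fin, nsmul_eq_mul]
          _ ≤ _ := Finset.sum_le_sum (fun j _ => key j)
      have hMM : (M:ℝ) * ((M:ℝ)⁻¹ * c2) = c2 := by field_simp
      rw [hMM] at hsum
      calc ((2:ℝ)^(k+1+1))⁻¹ = (1/2) * c2 := by
            rw [hc2, pow_succ, mul_inv]
            ring
        _ ≤ (1/2) * ∑ j : Fin M, tsir (k+1) (restr (Es j) X) := by linarith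
        _ ≤ tsir (k+1+1) X := hle
    · -- upper bound
      intro E
      apply tsir_succ_le (le_of_lt hε)
      · rw [hX, restr_smul, tsir_smul _ _ hMinvnn]
        calc (M:ℝ)⁻¹ * tsir k (restr E z) ≤ (M:ℝ)⁻¹ * ((M:ℝ) * ε₀) :=
              mul_le_mul_of_nonneg_left (he E) hMinvnn
          _ = ε₀ := by field_simp
          _ ≤ ε := by rw [hε₀def]; linarith
      · intro n F hadm
        have key : ∀ i : Fin n, tsir k (restr (F i) (restr E X)) =
            (M:ℝ)⁻¹ * tsir k (restr (F i ∩ E) z) := by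
          intro i
          rw [restr_restr, hX, restr_smul, tsir_smul _ _ hMinvnn]
        have hsum : ∑ i, tsir k (restr (F i) (restr E X)) =
            (M:ℝ)⁻¹ * ∑ i, tsir k (restr (F i ∩ E) z) := by
          rw [Finset.mul_sum]
          exact Finset.sum_congr rfl (fun i _ => key i)
        rw [hsum]
        have h1 : ∑ i, tsir k (restr (F i ∩ E) z) ≤ 1 + M * ε₀ := hf E n F hadm
        have h0 : (0:ℝ) ≤ ∑ i, tsir k (restr (F i ∩ E) z) :=
          Finset.sum_nonneg (fun i _ => tsir_nonneg _ _)
        calc (1/2) * ((M:ℝ)⁻¹ * ∑ i, tsir k (restr (F i ∩ E) z))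
            ≤ (1/2) * ((M:ℝ)⁻¹ * (1 + (M:ℝ)*ε₀)) := by
              apply mul_le_mul_of_nonneg_left _ (by norm_num)
              exact mul_le_mul_of_nonneg_left h1 hMinvnn
          _ = (1/2) * ((M:ℝ)⁻¹ + ε₀) := by
              congr 1
              field_simp
          _ ≤ ε := by
              rw [hε₀def]
              linarith

open scoped ENNReal

/-- The Tsirelson norm `‖x‖_T = sup_k ‖x‖_k`. -/
noncomputable def tsirT (x : ℕ →₀ ℝ) : ℝ := ⨆ k, tsir k x

lemma tsir_le_tsirT (k : ℕ) (x : ℕ →₀ ℝ) : tsir k x ≤ tsirT x := by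
  apply le_ciSup (f := fun k => tsir k x)
  refine ⟨l1 x, ?_⟩
  rintro r ⟨j, rfl⟩
  exact tsir_le_l1 j x

lemma tsir_pos {k : ℕ} {x : ℕ →₀ ℝ} (hx : x ≠ 0) : 0 < tsir k x := by
  obtain ⟨n, hn⟩ := Finsupp.support_nonempty_iff.mpr hx
  have h1 : 0 < |x n| := abs_pos.mpr (Finsupp.mem_support_iff.mp hn)
  calc (0:ℝ) < |x n| := h1
    _ ≤ tsir 0 x := abs_le_tsir0 x n
    _ ≤ tsir k x := tsir_mono_k (Nat.zero_le k) x


/-- for every `k`, `sup { ‖x‖_T / ‖x‖_k : ‖x‖_{ℓ1} = 1 } = ∞`; in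
particular there is no `K > 0` with `‖x‖_T ≤ K ‖x‖_k` for all `x`, i.e. `‖·‖_T` is
not equivalent to any iterate `‖·‖_k`. -/
theorem tsirT_not_equivalent_to_iterate (k : ℕ) :
    (⨆ x : { x : ℕ →₀ ℝ // l1 x = 1 },
        ENNReal.ofReal (tsirT x / tsir k x)) = ⊤ ∧
    (∀ C : ℝ, ∃ x : ℕ →₀ ℝ, l1 x = 1 ∧ C < tsirT x / tsir k x) ∧
    ¬ ∃ K : ℝ, 0 < K ∧ ∀ x : ℕ →₀ ℝ, tsirT x ≤ K * tsir k x := by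
  have part2 : ∀ C : ℝ, ∃ x : ℕ →₀ ℝ, l1 x = 1 ∧ C < tsirT x / tsir k x := by
    intro C
    set c2 : ℝ := ((2:ℝ)^(k+1))⁻¹ with hc2
    have hc2pos : 0 < c2 := by positivity
    set ε : ℝ := c2 / (|C| + 1) with hε
    have hεpos : 0 < ε := by positivity
    obtain ⟨x, _, _, hxl1, hxlow, hxup⟩ := main_construction k ε hεpos 0
    have hxne : x ≠ 0 := by
      intro h
      rw [h] at hxl1
      simp [l1] at hxl1
    have hkx : 0 < tsir k x := tsir_pos hxne
    have hkle : tsir k x ≤ ε := by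
      have := hxup x.support
      rwa [restr_support_self] at this
    have hT : c2 ≤ tsirT x := le_trans hxlow (tsir_le_tsirT (k+1) x)
    refine ⟨x, hxl1, ?_⟩
    have h1 : c2 / ε ≤ c2 / tsir k x :=
      div_le_div_of_nonneg_left (le_of_lt hc2pos) hkx hkle
    have h2 : c2 / tsir k x ≤ tsirT x / tsir k x := by
      gcongr
    have h3 : c2 / ε = |C| + 1 := by
      rw [hε]
      field_simp
    have h4 : C < |C| + 1 := lt_of_le_of_lt (le_abs_self C) (by linarith)
    linarith
  refine ⟨?_, part2, ?_⟩
  · rw [iSup_eq_top]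
    intro b hb
    obtain ⟨x, hx1, hx2⟩ := part2 b.toReal
    refine ⟨⟨x, hx1⟩, ?_⟩
    rw [ENNReal.lt_ofReal_iff_toReal_lt hb.ne]
    exact hx2
  · rintro ⟨K, hK, h⟩
    obtain ⟨x, hx1, hx2⟩ := part2 K
    have hxne : x ≠ 0 := by
      intro hx0
      rw [hx0] at hx1
      simp [l1] at hx1
    have hkx : 0 < tsir k x := tsir_pos hxne
    rw [lt_div_iff₀ hkx] at hx2
    have := h x
    linarith
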